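/- arXiv:1701.07960 — 10 statements merged into one kernel-verified Lean document; each statement's English description precedes it below -/
import Mathlib

section
/- Let γ be as in the context and define S̃_n and P̃_n as in the context. Then for every n ≥ 0, S̃_{2n}(x) = P̃_n(x²); that is, the even-indexed perturbed symmetric polynomials are obtained from the monic polynomials P̃_n by the quadratic substitution x ↦ x². -/
open Polynomial

/-- With the perturbed symmetric polynomials `S̃`
(`S̃₋₁ = 0`, `S̃₀ = 1`, `S̃ₙ = x·S̃ₙ₋₁ − ν̃ₙ·S̃ₙ₋₂`, where
`ν̃₂ⱼ = γ₂ⱼ₋₁` for `j ≥ 1` and `ν̃₂ⱼ₊₁ = γ₂ⱼ₊₂` for `j ≥ 0`)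
and the polynomials `P̃ₙ` defined by `P̃₀ = 1`, `P̃₁ = x − γ₁`,
`P̃ₙ₊₁ = (x − γ₂ₙ₊₁ − γ₂ₙ₊₂)·P̃ₙ − γ₂ₙ₋₁·γ₂ₙ₊₂·P̃ₙ₋₁` for `n ≥ 1`,
we have `S̃₂ₙ(x) = P̃ₙ(x²)` for all `n ≥ 0`. -/
theorem stmt_0 (γ : ℕ → ℝ) (hγ1 : 0 < γ 1) (hγ : ∀ n ≥ 2, 0 < γ n)
    (S Pt : ℕ → Polynomial ℝ)
    (hS0 : S 0 = 1) (hS1 : S 1 = X)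
    (hSeven : ∀ j ≥ 1, S (2*j) = X * S (2*j - 1) - C (γ (2*j - 1)) * S (2*j - 2))
    (hSodd : ∀ j ≥ 1, S (2*j+1) = X * S (2*j) - C (γ (2*j+2)) * S (2*j - 1))
    (hPt0 : Pt 0 = 1) (hPt1 : Pt 1 = X - C (γ 1))
    (hPt : ∀ n ≥ 1, Pt (n+1) =
      (X - C (γ (2*n+1) + γ (2*n+2))) * Pt n - C (γ (2*n - 1) * γ (2*n+2)) * Pt (n-1)) :
    ∀ n : ℕ, S (2*n) = (Pt n).comp (X ^ 2) := by
  suffices h : ∀ n : ℕ, S (2*n) = (Pt n).comp (X ^ 2) ∧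
      X * S (2*n+1) = (Pt (n+1)).comp (X ^ 2) + C (γ (2*n+1)) * (Pt n).comp (X ^ 2) by
    exact fun n => (h n).1
  intro n
  induction n with
  | zero =>
    refine ⟨by simpa [hPt0] using hS0, ?_⟩
    simp only [Nat.mul_zero, Nat.zero_add, hS1, hPt1, hPt0, sub_comp, X_comp, C_comp,
      one_comp, mul_one]
    ring
  | succ n ih =>
    obtain ⟨h1, h2⟩ := ih
    have hE := hSeven (n+1) (by omega)
    have hO := hSodd (n+1) (by omega)
    have hR := hPt (n+1) (by omega)
    have e1 : 2*(n+1) - 1 = 2*n+1 := by omega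
    have e2 : 2*(n+1) - 2 = 2*n := by omega
    have e3 : 2*(n+1) = 2*n+2 := by ring
    have e4 : 2*(n+1)+1 = 2*n+3 := by ring
    have e5 : 2*(n+1)+2 = 2*n+4 := by ring
    rw [e1, e2, e3] at hE
    rw [e1, e4, e5, e3] at hO
    rw [e4, e5, e1, Nat.add_sub_cancel] at hR
    have hA : S (2*(n+1)) = (Pt (n+1)).comp (X^2) := by
      rw [e3, hE]
      rw [show X * S (2*n+1) - C (γ (2*n+1)) * S (2*n)
        = (X * S (2*n+1)) - C (γ (2*n+1)) * S (2*n) from rfl, h2, h1]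
      ring
    refine ⟨hA, ?_⟩
    rw [e3] at hA
    rw [e4, hO, hA, hR]
    simp only [sub_comp, add_comp, mul_comp, X_comp, C_comp, map_add, map_mul]
    linear_combination (-(C (γ (2*n+4)))) * h2
end

section
/- Let γ be as in the context and define S̃_n and K̃_n as in the context. Then for every n ≥ 0, S̃_{2n+1}(x) = x·K̃_n(x²); that is, the odd-indexed perturbed symmetric polynomials are obtained from the monic polynomials K̃_n by multiplying by x after the quadratic substitution x ↦ x². -/
open Polynomial

/-- With the perturbed symmetric polynomials `S̃` and the
polynomials `K̃ₙ` (`K̃₀ = 1`, `K̃₁ = x − γ₁ − γ₄`,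
`K̃ₙ₊₁ = (x − γ₂ₙ₊₁ − γ₂ₙ₊₄)·K̃ₙ − γ₂ₙ₊₁·γ₂ₙ₊₂·K̃ₙ₋₁` for `n ≥ 1`),
we have `S̃₂ₙ₊₁(x) = x·K̃ₙ(x²)` for all `n ≥ 0`. -/
theorem stmt_1 (γ : ℕ → ℝ) (hγ1 : 0 < γ 1) (hγ : ∀ n ≥ 2, 0 < γ n)
    (S Kt : ℕ → Polynomial ℝ)
    (hS0 : S 0 = 1) (hS1 : S 1 = X)
    (hSeven : ∀ j ≥ 1, S (2*j) = X * S (2*j - 1) - C (γ (2*j - 1)) * S (2*j - 2))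
    (hSodd : ∀ j ≥ 1, S (2*j+1) = X * S (2*j) - C (γ (2*j+2)) * S (2*j - 1))
    (hKt0 : Kt 0 = 1) (hKt1 : Kt 1 = X - C (γ 1 + γ 4))
    (hKt : ∀ n ≥ 1, Kt (n+1) =
      (X - C (γ (2*n+1) + γ (2*n+4))) * Kt n - C (γ (2*n+1) * γ (2*n+2)) * Kt (n-1)) :
    ∀ n : ℕ, S (2*n+1) = X * (Kt n).comp (X ^ 2) := by
  intro n
  induction n using Nat.strong_induction_on with
  | _ n ih =>
    match n with
    | 0 => simp [hS1, hKt0]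
    | 1 =>
      have h2 := hSeven 1 (by norm_num)
      have h3 := hSodd 1 (by norm_num)
      norm_num at h2 h3
      rw [h3, h2, hS0, hS1, hKt1, sub_comp, X_comp, C_comp]
      simp only [map_add]
      ring
    | (m+2) =>
      have hp0 := ih m (by omega)
      have hp1 : S (2*m+3) = X * (Kt (m+1)).comp (X ^ 2) := by
        have h := ih (m+1) (by omega)
        rwa [show 2*(m+1)+1 = 2*m+3 by ring] at h
      have e1 : S (2*m+5) = X * S (2*m+4) - C (γ (2*m+6)) * S (2*m+3) := by
        have h := hSodd (m+2) (by omega)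
        rwa [show 2*(m+2)+1 = 2*m+5 by ring, show 2*(m+2)+2 = 2*m+6 by ring,
          show 2*(m+2)-1 = 2*m+3 by omega, show 2*(m+2) = 2*m+4 by ring] at h
      have e2 : S (2*m+4) = X * S (2*m+3) - C (γ (2*m+3)) * S (2*m+2) := by
        have h := hSeven (m+2) (by omega)
        rwa [show 2*(m+2)-1 = 2*m+3 by omega, show 2*(m+2)-2 = 2*m+2 by omega,
          show 2*(m+2) = 2*m+4 by ring] at h
      have e3 : S (2*m+3) = X * S (2*m+2) - C (γ (2*m+4)) * S (2*m+1) := by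
        have h := hSodd (m+1) (by omega)
        rwa [show 2*(m+1)+1 = 2*m+3 by ring, show 2*(m+1)+2 = 2*m+4 by ring,
          show 2*(m+1)-1 = 2*m+1 by omega, show 2*(m+1) = 2*m+2 by ring] at h
      have ek := hKt (m+1) (by omega)
      rw [show 2*(m+1)+1 = 2*m+3 by ring, show 2*(m+1)+4 = 2*m+6 by ring,
        show 2*(m+1)+2 = 2*m+4 by ring, show (m+1)-1 = m by omega] at ek
      rw [show 2*(m+2)+1 = 2*m+5 by ring, ek, sub_comp, mul_comp, sub_comp,
        X_comp, C_comp, mul_comp, C_comp]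
      simp only [map_add, map_mul]
      linear_combination e1 + X*e2 + C (γ (2*m+3)) * e3
        + (X^2 - C (γ (2*m+3)) - C (γ (2*m+6))) * hp1
        - C (γ (2*m+3)) * C (γ (2*m+4)) * hp0
end

section
/- Let γ be as in the context and define P̃_n and K̃_n as in the context. Then the two coupled relations hold: P̃_m(x) = x·K̃_{m−1}(x) − γ_{2m−1}·P̃_{m−1}(x) for all m ≥ 1, and K̃_m(x) = P̃_m(x) − γ_{2m+2}·K̃_{m−1}(x) for all m ≥ 1. -/
open Polynomial

/-- The coupled relations
`P̃ₘ(x) = x·K̃ₘ₋₁(x) − γ₂ₘ₋₁·P̃ₘ₋₁(x)` and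
`K̃ₘ(x) = P̃ₘ(x) − γ₂ₘ₊₂·K̃ₘ₋₁(x)` hold for all `m ≥ 1`. -/
theorem stmt_2 (γ : ℕ → ℝ) (hγ1 : 0 < γ 1) (hγ : ∀ n ≥ 2, 0 < γ n)
    (Pt Kt : ℕ → Polynomial ℝ)
    (hPt0 : Pt 0 = 1) (hPt1 : Pt 1 = X - C (γ 1))
    (hPt : ∀ n ≥ 1, Pt (n+1) =
      (X - C (γ (2*n+1) + γ (2*n+2))) * Pt n - C (γ (2*n - 1) * γ (2*n+2)) * Pt (n-1))
    (hKt0 : Kt 0 = 1) (hKt1 : Kt 1 = X - C (γ 1 + γ 4))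
    (hKt : ∀ n ≥ 1, Kt (n+1) =
      (X - C (γ (2*n+1) + γ (2*n+4))) * Kt n - C (γ (2*n+1) * γ (2*n+2)) * Kt (n-1)) :
    (∀ m ≥ 1, Pt m = X * Kt (m-1) - C (γ (2*m - 1)) * Pt (m-1)) ∧
    (∀ m ≥ 1, Kt m = Pt m - C (γ (2*m+2)) * Kt (m-1)) := by
  have key : ∀ m ≥ 1,
      (Pt m = X * Kt (m-1) - C (γ (2*m - 1)) * Pt (m-1)) ∧
      (Kt m = Pt m - C (γ (2*m+2)) * Kt (m-1)) := by
    intro m hm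
    induction m, hm using Nat.le_induction with
    | base =>
      constructor
      · simp [hPt1, hKt0, hPt0]
      · simp only [hKt1, hPt1, hKt0]
        push_cast
        ring_nf
        simp [map_add]
        ring
    | succ m hm ih =>
      obtain ⟨hA, hB⟩ := ih
      have h1 : m + 1 - 1 = m := rfl
      have h2 : 2 * (m + 1) - 1 = 2 * m + 1 := by omega
      have hA' : Pt (m+1) = X * Kt m - C (γ (2*m+1)) * Pt m := by
        rw [hPt m hm, hB, hA]
        have h3 : 2 * m - 1 + 1 = 2 * m := by omega
        simp only [map_add, map_mul]
        ring
      constructor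
      · rw [h1, h2, hA']
      · rw [hKt m hm, hA']
        have hPK : Pt m - Kt m = C (γ (2*m+2)) * Kt (m-1) := by
          rw [hB]; ring
        have h4 : 2*(m+1)+2 = 2*m+4 := by omega
        rw [h4]
        have : Pt m = Kt m + C (γ (2*m+2)) * Kt (m-1) := by rw [hB]; ring
        rw [this]
        simp only [map_add, map_mul, h1]
        ring
  exact ⟨fun m hm => (key m hm).1, fun m hm => (key m hm).2⟩
end

section
/- Let γ be as in the context and define K_n and K̃_n as in the context. If γ_{2n+1} − γ_{2n−1} = γ_{2n+2} − γ_{2n} for all n ≥ 1, then K̃_n = K_n for all n ≥ 0; that is, the kernel polynomial system remains invariant under the passage to the (generalised) complementary chain sequence. -/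
open Polynomial

/-- If `γ₂ₙ₊₁ − γ₂ₙ₋₁ = γ₂ₙ₊₂ − γ₂ₙ` for all `n ≥ 1`, then the
kernel polynomial system is invariant under passage to the (generalised)
complementary chain sequence: `K̃ₙ = Kₙ` for all `n ≥ 0`. -/
theorem stmt_5 (γ : ℕ → ℝ) (hγ1 : 0 < γ 1) (hγ : ∀ n ≥ 2, 0 < γ n)
    (K Kt : ℕ → Polynomial ℝ)
    (hK0 : K 0 = 1) (hK1 : K 1 = X - C (γ 2 + γ 3))
    (hK : ∀ n ≥ 1, K (n+1) =
      (X - C (γ (2*n+2) + γ (2*n+3))) * K n - C (γ (2*n+1) * γ (2*n+2)) * K (n-1))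
    (hKt0 : Kt 0 = 1) (hKt1 : Kt 1 = X - C (γ 1 + γ 4))
    (hKt : ∀ n ≥ 1, Kt (n+1) =
      (X - C (γ (2*n+1) + γ (2*n+4))) * Kt n - C (γ (2*n+1) * γ (2*n+2)) * Kt (n-1))
    (hcond : ∀ n ≥ 1, γ (2*n+1) - γ (2*n - 1) = γ (2*n+2) - γ (2*n)) :
    ∀ n : ℕ, Kt n = K n := by
  have h1 : Kt 1 = K 1 := by
    have := hcond 1 le_rfl
    rw [hKt1, hK1]
    norm_num at this
    rw [show γ 1 + γ 4 = γ 2 + γ 3 by linarith]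
  have key : ∀ n : ℕ, Kt n = K n ∧ Kt (n+1) = K (n+1) := by
    intro n
    induction n with
    | zero => exact ⟨hKt0.trans hK0.symm, h1⟩
    | succ m ih =>
      refine ⟨ih.2, ?_⟩
      have hc := hcond (m+1) (by omega)
      have hco : γ (2*(m+1)+1) + γ (2*(m+1)+4) = γ (2*(m+1)+2) + γ (2*(m+1)+3) := by
        have := hcond (m+2) (by omega)
        have e1 : 2*(m+2)+1 = 2*(m+1)+3 := by omega
        have e2 : 2*(m+2) - 1 = 2*(m+1)+1 := by omega
        have e3 : 2*(m+2)+2 = 2*(m+1)+4 := by omega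
        have e4 : 2*(m+2) = 2*(m+1)+2 := by omega
        rw [e1, e2, e3, e4] at this
        linarith
      rw [hKt (m+1) (by omega), hK (m+1) (by omega), hco, show m+1-1 = m from rfl, ih.1, ih.2]
  exact fun n => (key n).1
end

section
/- Let γ, P_n, P̃_n be as in the context. Fix n ≥ 1 and suppose P_n(x) = ∏_{j=1}^n (x − x_j) and P̃_n(x) = ∏_{j=1}^n (x − x̃_j) with x_1 < x_2 < ⋯ < x_n and x̃_1 < x̃_2 < ⋯ < x̃_n. If (γ_1 − γ_2) and (x_j − x̃_j) are both strictly positive, or both strictly negative, for some index j ∈ {1,…,n}, then the zeros of P_n and P̃_n do not interlace; that is, neither the ordering x̃_1 < x_1 < x̃_2 < x_2 < ⋯ < x̃_n < x_n nor the ordering x_1 < x̃_1 < x_2 < x̃_2 < ⋯ < x_n < x̃_n holds. -/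
open Polynomial

private lemma monic_deg_aux (c : ℕ → ℝ) (b : ℕ → ℝ) (Q : ℕ → Polynomial ℝ) (q0 : ℝ)
    (hQ0 : Q 0 = 1) (hQ1 : Q 1 = X - C q0)
    (hQ : ∀ n ≥ 1, Q (n+1) = (X - C (c n)) * Q n - C (b n) * Q (n-1)) :
    ∀ n : ℕ, (Q n).Monic ∧ (Q n).natDegree = n := by
  have key : ∀ n : ℕ, ((Q n).Monic ∧ (Q n).natDegree = n) ∧
      ((Q (n+1)).Monic ∧ (Q (n+1)).natDegree = n+1) := by
    intro n
    induction n with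
    | zero =>
      refine ⟨⟨?_, ?_⟩, ?_, ?_⟩ <;> simp [hQ0, hQ1, monic_X_sub_C, natDegree_X_sub_C]
    | succ m ih =>
      obtain ⟨⟨hm1, hm2⟩, hm3, hm4⟩ := ih
      refine ⟨⟨hm3, hm4⟩, ?_⟩
      rw [hQ (m+1) (by omega)]
      simp only [Nat.add_sub_cancel]
      have hmul : (((X - C (c (m+1))) * Q (m+1))).Monic :=
        (monic_X_sub_C _).mul hm3
      have hdegmul : (((X - C (c (m+1))) * Q (m+1))).natDegree = m + 2 := by
        rw [(monic_X_sub_C _).natDegree_mul hm3, natDegree_X_sub_C, hm4]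
        omega
      have hlt : (C (b (m+1)) * Q m).natDegree < (((X - C (c (m+1))) * Q (m+1))).natDegree := by
        rw [hdegmul]
        calc (C (b (m+1)) * Q m).natDegree ≤ (C (b (m+1))).natDegree + (Q m).natDegree :=
              natDegree_mul_le
          _ ≤ m := by simp [hm2]
          _ < m + 2 := by omega
      have hdlt : (C (b (m+1)) * Q m).degree < (((X - C (c (m+1))) * Q (m+1))).degree := by
        rw [degree_eq_natDegree hmul.ne_zero]
        exact lt_of_le_of_lt degree_le_natDegree (by exact_mod_cast hlt)
      constructor
      · exact hmul.sub_of_left hdlt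
      · rw [natDegree_sub_eq_left_of_natDegree_lt hlt, hdegmul]
  exact fun n => (key n).1

private lemma coeff_step (c b : ℕ → ℝ) (Q : ℕ → Polynomial ℝ) (q0 : ℝ)
    (hQ0 : Q 0 = 1) (hQ1 : Q 1 = X - C q0)
    (hQ : ∀ n ≥ 1, Q (n+1) = (X - C (c n)) * Q n - C (b n) * Q (n-1)) :
    ∀ n ≥ 1, (Q (n+1)).coeff n = (Q n).coeff (n-1) - c n := by
  intro n hn
  have hmd := monic_deg_aux c b Q q0 hQ0 hQ1 hQ
  rw [hQ n hn]
  have h1 : ((X - C (c n)) * Q n).coeff n = (Q n).coeff (n-1) - c n := by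
    rw [sub_mul, coeff_sub]
    have hx : (X * Q n).coeff n = (Q n).coeff (n-1) := by
      obtain ⟨m, rfl⟩ : ∃ m, n = m + 1 := ⟨n-1, by omega⟩
      rw [coeff_X_mul]; simp
    rw [hx, coeff_C_mul]
    have : (Q n).coeff n = 1 := by
      have := (hmd n).1.coeff_natDegree
      rwa [(hmd n).2] at this
    rw [this, mul_one]
  have h2 : (C (b n) * Q (n-1)).coeff n = 0 := by
    rw [coeff_C_mul, coeff_eq_zero_of_natDegree_lt, mul_zero]
    rw [(hmd (n-1)).2]; omega
  rw [coeff_sub, h1, h2, sub_zero]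

/-- For fixed `n ≥ 1`, with
`Pₙ(x) = ∏ (x − xⱼ)`, `P̃ₙ(x) = ∏ (x − x̃ⱼ)` and the zeros listed increasingly,
if `(γ₁ − γ₂)` and `(xⱼ − x̃ⱼ)` have the same (strict) sign for some `j`, then
the zeros of `Pₙ` and `P̃ₙ` cannot interlace (in either order). -/
theorem stmt_9 (γ : ℕ → ℝ) (hγ1 : 0 < γ 1) (hγ : ∀ n ≥ 2, 0 < γ n)
    (P Pt : ℕ → Polynomial ℝ)
    (hP0 : P 0 = 1) (hP1 : P 1 = X - C (γ 2))
    (hP : ∀ n ≥ 1, P (n+1) =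
      (X - C (γ (2*n+1) + γ (2*n+2))) * P n - C (γ (2*n) * γ (2*n+1)) * P (n-1))
    (hPt0 : Pt 0 = 1) (hPt1 : Pt 1 = X - C (γ 1))
    (hPt : ∀ n ≥ 1, Pt (n+1) =
      (X - C (γ (2*n+1) + γ (2*n+2))) * Pt n - C (γ (2*n - 1) * γ (2*n+2)) * Pt (n-1))
    (n : ℕ) (hn : 1 ≤ n) (x xt : ℕ → ℝ)
    (hPfac : P n = ∏ j ∈ Finset.Icc 1 n, (X - C (x j)))
    (hPtfac : Pt n = ∏ j ∈ Finset.Icc 1 n, (X - C (xt j)))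
    (hxmono : ∀ i j, 1 ≤ i → i < j → j ≤ n → x i < x j)
    (hxtmono : ∀ i j, 1 ≤ i → i < j → j ≤ n → xt i < xt j)
    (j : ℕ) (hj1 : 1 ≤ j) (hjn : j ≤ n)
    (hsign : (0 < γ 1 - γ 2 ∧ 0 < x j - xt j) ∨ (γ 1 - γ 2 < 0 ∧ x j - xt j < 0)) :
    ¬((∀ i, 1 ≤ i → i ≤ n → xt i < x i) ∧ (∀ i, 1 ≤ i → i < n → x i < xt (i+1))) ∧
    ¬((∀ i, 1 ≤ i → i ≤ n → x i < xt i) ∧ (∀ i, 1 ≤ i → i < n → xt i < x (i+1))) := by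
  -- subleading coefficient difference is constant = γ 1 - γ 2
  have hdiff : ∀ m ≥ 1, (P m).coeff (m-1) - (Pt m).coeff (m-1) = γ 1 - γ 2 := by
    intro m hm
    clear hn hPfac hPtfac
    induction m, hm using Nat.le_induction with
    | base => simp [hP1, hPt1]; ring
    | succ m hm ih =>
      have h1 := coeff_step (fun k => γ (2*k+1) + γ (2*k+2)) (fun k => γ (2*k) * γ (2*k+1))
        P (γ 2) hP0 hP1 hP m hm
      have h2 := coeff_step (fun k => γ (2*k+1) + γ (2*k+2)) (fun k => γ (2*k-1) * γ (2*k+2))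
        Pt (γ 1) hPt0 hPt1 hPt m hm
      simp only [Nat.add_sub_cancel]
      rw [h1, h2]
      linarith [ih]
  -- sums of roots
  have hmdP := monic_deg_aux (fun k => γ (2*k+1) + γ (2*k+2)) (fun k => γ (2*k) * γ (2*k+1))
    P (γ 2) hP0 hP1 hP
  have hmdPt := monic_deg_aux (fun k => γ (2*k+1) + γ (2*k+2)) (fun k => γ (2*k-1) * γ (2*k+2))
    Pt (γ 1) hPt0 hPt1 hPt
  have hcoeffP : (P n).coeff (n-1) = -∑ i ∈ Finset.Icc 1 n, x i := by
    have := prod_X_sub_C_nextCoeff (s := Finset.Icc 1 n) x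
    rw [← hPfac, nextCoeff, if_neg (by rw [(hmdP n).2]; omega), (hmdP n).2] at this
    exact this
  have hcoeffPt : (Pt n).coeff (n-1) = -∑ i ∈ Finset.Icc 1 n, xt i := by
    have := prod_X_sub_C_nextCoeff (s := Finset.Icc 1 n) xt
    rw [← hPtfac, nextCoeff, if_neg (by rw [(hmdPt n).2]; omega), (hmdPt n).2] at this
    exact this
  have hsum : ∑ i ∈ Finset.Icc 1 n, (x i - xt i) = γ 2 - γ 1 := by
    have h := hdiff n hn
    rw [hcoeffP, hcoeffPt] at h
    rw [Finset.sum_sub_distrib]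
    linarith
  have hjmem : j ∈ Finset.Icc 1 n := Finset.mem_Icc.mpr ⟨hj1, hjn⟩
  rcases hsign with ⟨hg, hx⟩ | ⟨hg, hx⟩
  · constructor
    · rintro ⟨h1, -⟩
      have hpos : 0 < ∑ i ∈ Finset.Icc 1 n, (x i - xt i) :=
        Finset.sum_pos (fun i hi => by
          have := Finset.mem_Icc.mp hi
          linarith [h1 i this.1 this.2]) ⟨j, hjmem⟩
      linarith [hsum]
    · rintro ⟨h2, -⟩
      have := h2 j hj1 hjn
      linarith
  · constructor
    · rintro ⟨h1, -⟩
      have := h1 j hj1 hjn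
      linarith
    · rintro ⟨h2, -⟩
      have hneg : ∑ i ∈ Finset.Icc 1 n, (x i - xt i) < 0 := by
        have : 0 < ∑ i ∈ Finset.Icc 1 n, (xt i - x i) :=
          Finset.sum_pos (fun i hi => by
            have := Finset.mem_Icc.mp hi
            linarith [h2 i this.1 this.2]) ⟨j, hjmem⟩
        have := Finset.sum_sub_distrib (s := Finset.Icc 1 n) (f := xt) (g := x)
        rw [Finset.sum_sub_distrib]
        linarith [this]
      linarith [hsum]
end

section
/- Let γ, P_n, P̃_n be as in the context. Fix n ≥ 1 and suppose P_n(x) = ∏_{j=1}^n (x − x_j) and P̃_n(x) = ∏_{j=1}^n (x − x̃_j) with x_1 < x_2 < ⋯ < x_n and x̃_1 < x̃_2 < ⋯ < x̃_n. If γ_1 = γ_2, then the zeros of P_n and P̃_n can never interlace; that is, neither the ordering x̃_1 < x_1 < x̃_2 < x_2 < ⋯ < x̃_n < x_n nor the ordering x_1 < x̃_1 < x_2 < x̃_2 < ⋯ < x_n < x̃_n holds. -/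
/-!
When `γ₁ = γ₂` the two families share the diagonal coefficients `γ_{2n+1} + γ_{2n+2}` and the
first two terms, so `Pₙ - P̃ₙ` has degree at most `n - 2`. Hence the coefficients of `x^{n-1}`
agree, i.e. the zeros of `Pₙ` and of `P̃ₙ` have the same sum. Strict interlacing in either order
would make one sum strictly larger than the other.
-/

open Polynomial Finset

section ThreeTermRecurrence

variable {R : Type*} [Ring R]

def ThreeTermRecurrence (p : ℕ → R[X]) (a c : ℕ → R) : Prop :=
  ∀ n ≥ 1, p (n + 1) = (X - C (a n)) * p n - C (c n) * p (n - 1)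

theorem ThreeTermRecurrence.natDegree_le {p : ℕ → R[X]} {a c : ℕ → R}
    (h : ThreeTermRecurrence p a c) (h0 : (p 0).natDegree = 0) (h1 : (p 1).natDegree ≤ 1) :
    ∀ m, (p m).natDegree ≤ m := by
  intro m
  induction m using Nat.twoStepInduction with
  | zero => exact h0.le
  | one => exact h1
  | more m ih₀ ih₁ =>
    rw [h (m + 1) m.succ_pos, Nat.add_sub_cancel]
    refine (natDegree_sub_le _ _).trans (max_le ?_ ?_)
    · exact natDegree_mul_le.trans (by linarith [natDegree_X_sub_C_le (a (m + 1))])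
    · exact (natDegree_C_mul_le _ _).trans (by omega)

theorem ThreeTermRecurrence.degree_sub_lt {p q : ℕ → R[X]} {a c d : ℕ → R}
    (hp : ThreeTermRecurrence p a c) (hq : ThreeTermRecurrence q a d)
    (hp_deg : ∀ m, (p m).natDegree ≤ m) (hq_deg : ∀ m, (q m).natDegree ≤ m) (h1 : p 1 = q 1) :
    ∀ m, (p (m + 1) - q (m + 1)).degree < m := by
  intro m
  induction m with
  | zero => simp [h1]
  | succ m ih =>
    have hsplit : p (m + 2) - q (m + 2) = (X - C (a (m + 1))) * (p (m + 1) - q (m + 1))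
        - (C (c (m + 1)) * p m - C (d (m + 1)) * q m) := by
      rw [hp (m + 1) m.succ_pos, hq (m + 1) m.succ_pos, Nat.add_sub_cancel, mul_sub]; abel
    rw [hsplit]
    refine (degree_sub_le _ _).trans_lt (max_lt ?_ ?_)
    · calc ((X - C (a (m + 1))) * (p (m + 1) - q (m + 1))).degree
          ≤ 1 + (p (m + 1) - q (m + 1)).degree :=
            (degree_mul_le _ _).trans (add_le_add_left (degree_X_sub_C_le _) _)
        _ < 1 + m := WithBot.add_lt_add_left WithBot.one_ne_bot ih
        _ = ↑(m + 1) := by push_cast; ring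
    · have hC_mul {r : R} {f : R[X]} (hf : f.natDegree ≤ m) : (C r * f).degree < ↑(m + 1) :=
        degree_le_natDegree.trans_lt <| by
          exact_mod_cast (natDegree_C_mul_le r f).trans_lt (Nat.lt_succ_of_le hf)
      exact (degree_sub_le _ _).trans_lt (max_lt (hC_mul (hp_deg m)) (hC_mul (hq_deg m)))

end ThreeTermRecurrence

theorem Finset.sum_eq_sum_of_coeff_prod_X_sub_C_eq {R ι : Type*} [CommRing R] {s : Finset ι}
    (hs : s.Nonempty) {f g : ι → R}
    (h : (∏ i ∈ s, (X - C (f i))).coeff (#s - 1) = (∏ i ∈ s, (X - C (g i))).coeff (#s - 1)) :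
    ∑ i ∈ s, f i = ∑ i ∈ s, g i := by
  rwa [prod_X_sub_C_coeff_card_pred s f hs.card_pos, prod_X_sub_C_coeff_card_pred s g hs.card_pos,
    neg_inj] at h

theorem stmt_10_general (γ : ℕ → ℝ)
    (P Pt : ℕ → Polynomial ℝ)
    (hP0 : P 0 = 1) (hP1 : P 1 = X - C (γ 2))
    (hP : ∀ n ≥ 1, P (n+1) =
      (X - C (γ (2*n+1) + γ (2*n+2))) * P n - C (γ (2*n) * γ (2*n+1)) * P (n-1))
    (hPt0 : Pt 0 = 1) (hPt1 : Pt 1 = X - C (γ 1))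
    (hPt : ∀ n ≥ 1, Pt (n+1) =
      (X - C (γ (2*n+1) + γ (2*n+2))) * Pt n - C (γ (2*n - 1) * γ (2*n+2)) * Pt (n-1))
    (n : ℕ) (hn : 1 ≤ n) (x xt : ℕ → ℝ)
    (hPfac : P n = ∏ j ∈ Finset.Icc 1 n, (X - C (x j)))
    (hPtfac : Pt n = ∏ j ∈ Finset.Icc 1 n, (X - C (xt j)))
    (heq : γ 1 = γ 2) :
    ¬((∀ i, 1 ≤ i → i ≤ n → xt i < x i) ∧ (∀ i, 1 ≤ i → i < n → x i < xt (i+1))) ∧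
    ¬((∀ i, 1 ≤ i → i ≤ n → x i < xt i) ∧ (∀ i, 1 ≤ i → i < n → xt i < x (i+1))) := by
  obtain ⟨m, rfl⟩ : ∃ m, n = m + 1 := ⟨n - 1, by omega⟩
  have hrec : ThreeTermRecurrence P (fun n ↦ γ (2*n+1) + γ (2*n+2))
      (fun n ↦ γ (2*n) * γ (2*n+1)) := hP
  have hrect : ThreeTermRecurrence Pt (fun n ↦ γ (2*n+1) + γ (2*n+2))
      (fun n ↦ γ (2*n - 1) * γ (2*n+2)) := hPt
  have hdeg := hrec.natDegree_le (by rw [hP0, natDegree_one]) (hP1 ▸ natDegree_X_sub_C_le _)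
  have hdegt := hrect.natDegree_le (by rw [hPt0, natDegree_one]) (hPt1 ▸ natDegree_X_sub_C_le _)
  have hcoeff : (P (m + 1)).coeff m = (Pt (m + 1)).coeff m := by
    rw [← sub_eq_zero, ← coeff_sub]
    exact coeff_eq_zero_of_degree_lt <|
      hrec.degree_sub_lt hrect hdeg hdegt (by rw [hP1, hPt1, heq]) m
  have hne : (Icc 1 (m + 1)).Nonempty := nonempty_Icc.2 hn
  have hsum : ∑ j ∈ Icc 1 (m + 1), x j = ∑ j ∈ Icc 1 (m + 1), xt j := by
    refine sum_eq_sum_of_coeff_prod_X_sub_C_eq hne ?_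
    rwa [Nat.card_Icc, Nat.add_sub_cancel, Nat.add_sub_cancel, ← hPfac, ← hPtfac]
  have hno_strict {f g : ℕ → ℝ} (hfg : ∑ j ∈ Icc 1 (m + 1), f j ≤ ∑ j ∈ Icc 1 (m + 1), g j) :
      ¬ ∀ i, 1 ≤ i → i ≤ m + 1 → g i < f i := fun hlt ↦ by
    obtain ⟨i, hi, hle⟩ := exists_le_of_sum_le hne hfg
    exact (hlt i (mem_Icc.1 hi).1 (mem_Icc.1 hi).2).not_ge hle
  exact ⟨fun h ↦ hno_strict hsum.le h.1, fun h ↦ hno_strict hsum.ge h.1⟩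

/-- For fixed `n ≥ 1`, with
`Pₙ(x) = ∏ (x − xⱼ)`, `P̃ₙ(x) = ∏ (x − x̃ⱼ)` and the zeros listed increasingly,
if `γ₁ = γ₂` then the zeros of `Pₙ` and `P̃ₙ` can never interlace
(in either order). -/
theorem stmt_10 (γ : ℕ → ℝ) (hγ1 : 0 < γ 1) (hγ : ∀ n ≥ 2, 0 < γ n)
    (P Pt : ℕ → Polynomial ℝ)
    (hP0 : P 0 = 1) (hP1 : P 1 = X - C (γ 2))
    (hP : ∀ n ≥ 1, P (n+1) =
      (X - C (γ (2*n+1) + γ (2*n+2))) * P n - C (γ (2*n) * γ (2*n+1)) * P (n-1))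
    (hPt0 : Pt 0 = 1) (hPt1 : Pt 1 = X - C (γ 1))
    (hPt : ∀ n ≥ 1, Pt (n+1) =
      (X - C (γ (2*n+1) + γ (2*n+2))) * Pt n - C (γ (2*n - 1) * γ (2*n+2)) * Pt (n-1))
    (n : ℕ) (hn : 1 ≤ n) (x xt : ℕ → ℝ)
    (hPfac : P n = ∏ j ∈ Finset.Icc 1 n, (X - C (x j)))
    (hPtfac : Pt n = ∏ j ∈ Finset.Icc 1 n, (X - C (xt j)))
    (hxmono : ∀ i j, 1 ≤ i → i < j → j ≤ n → x i < x j)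
    (hxtmono : ∀ i j, 1 ≤ i → i < j → j ≤ n → xt i < xt j)
    (heq : γ 1 = γ 2) :
    ¬((∀ i, 1 ≤ i → i ≤ n → xt i < x i) ∧ (∀ i, 1 ≤ i → i < n → x i < xt (i+1))) ∧
    ¬((∀ i, 1 ≤ i → i ≤ n → x i < xt i) ∧ (∀ i, 1 ≤ i → i < n → xt i < x (i+1))) :=
  stmt_10_general γ P Pt hP0 hP1 hP hPt0 hPt1 hPt n hn x xt hPfac hPtfac heq
end

section
/- Let γ be as in the context and define P_n and K_n as in the context. Then x·K_n(x) = P_{n+1}(x) + γ_{2n+2}·P_n(x) for all n ≥ 0. -/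
open Polynomial

/-- `x·Kₙ(x) = Pₙ₊₁(x) + γ₂ₙ₊₂·Pₙ(x)` holds for all `n ≥ 0`. -/
theorem stmt_13 (γ : ℕ → ℝ) (hγ : ∀ n ≥ 1, 0 < γ n)
    (P K : ℕ → Polynomial ℝ)
    (hP0 : P 0 = 1) (hP1 : P 1 = X - C (γ 2))
    (hP : ∀ n ≥ 1, P (n+1) =
      (X - C (γ (2*n+1) + γ (2*n+2))) * P n - C (γ (2*n) * γ (2*n+1)) * P (n-1))
    (hK0 : K 0 = 1) (hK1 : K 1 = X - C (γ 2 + γ 3))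
    (hK : ∀ n ≥ 1, K (n+1) =
      (X - C (γ (2*n+2) + γ (2*n+3))) * K n - C (γ (2*n+1) * γ (2*n+2)) * K (n-1)) :
    ∀ n : ℕ, X * K n = P (n+1) + C (γ (2*n+2)) * P n := by
  intro n
  induction n using Nat.twoStepInduction with
  | zero =>
    rw [hK0, hP0]
    norm_num [hP1]
  | one =>
    have h1 := hP 1 (by norm_num)
    norm_num at h1 ⊢
    rw [hK1, h1, hP1, hP0]
    simp only [C_add, C_mul]
    ring
  | more n ih0 ih1 =>
    have hk := hK (n+1) (by omega)
    have hp2 := hP (n+2) (by omega)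
    have hp1 := hP (n+1) (by omega)
    simp only [Nat.add_sub_cancel, show n+2-1 = n+1 from rfl] at hk hp2 hp1
    have key : X * K (n+2) =
        (X - C (γ (2*(n+1)+2) + γ (2*(n+1)+3))) * (X * K (n+1))
        - C (γ (2*(n+1)+1) * γ (2*(n+1)+2)) * (X * K n) := by
      rw [hk]; ring
    rw [key, ih1, ih0, hp2, hp1]
    have e1 : 2*(n+2)+2 = 2*n+6 := by ring
    have e2 : 2*(n+2)+1 = 2*n+5 := by ring
    have e3 : 2*(n+2) = 2*n+4 := by ring
    have e4 : 2*(n+1)+3 = 2*n+5 := by ring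
    have e5 : 2*(n+1)+2 = 2*n+4 := by ring
    have e6 : 2*(n+1)+1 = 2*n+3 := by ring
    have e7 : 2*(n+1) = 2*n+2 := by ring
    simp only [e1, e2, e3, e4, e5, e6, e7, C_add, C_mul]
    ring
end

section
/- Let γ be as in the context and define P_n, K^{(1)}_n and Q_n as in the context. Then for all n ≥ 1, x²·Q_n(x) − γ_2·x·(K^{(1)}_{n+1}(x) + γ_{2n+3}·K^{(1)}_n(x)) = P_{n+2}(x) + (γ_{2n+3} + γ_{2n+4})·P_{n+1}(x) + γ_{2n+2}·γ_{2n+3}·P_n(x); in particular the left-hand side is a linear combination of the three consecutive orthogonal polynomials P_{n+2}, P_{n+1}, P_n. -/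
open Polynomial

/-- For all `n ≥ 1`,
`x²·Qₙ(x) − γ₂·x·(K⁽¹⁾ₙ₊₁(x) + γ₂ₙ₊₃·K⁽¹⁾ₙ(x))
 = Pₙ₊₂(x) + (γ₂ₙ₊₃ + γ₂ₙ₊₄)·Pₙ₊₁(x) + γ₂ₙ₊₂·γ₂ₙ₊₃·Pₙ(x)`,
so that the left-hand side is a linear combination of `Pₙ₊₂`, `Pₙ₊₁`, `Pₙ`. -/
theorem stmt_14 (γ : ℕ → ℝ) (hγ : ∀ n ≥ 1, 0 < γ n)
    (P K1 Q : ℕ → Polynomial ℝ)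
    (hP0 : P 0 = 1) (hP1 : P 1 = X - C (γ 2))
    (hP : ∀ n ≥ 1, P (n+1) =
      (X - C (γ (2*n+1) + γ (2*n+2))) * P n - C (γ (2*n) * γ (2*n+1)) * P (n-1))
    (hK10 : K1 0 = 0) (hK11 : K1 1 = 1)
    (hK1rec : ∀ n ≥ 1, K1 (n+1) =
      (X - C (γ (2*n+2) + γ (2*n+3))) * K1 n - C (γ (2*n+1) * γ (2*n+2)) * K1 (n-1))
    (hQ0 : Q 0 = 1) (hQ1 : Q 1 = X - C (γ 3 + γ 4))
    (hQ : ∀ n ≥ 1, Q (n+1) =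
      (X - C (γ (2*n+3) + γ (2*n+4))) * Q n - C (γ (2*n+2) * γ (2*n+3)) * Q (n-1)) :
    ∀ n ≥ 1, X ^ 2 * Q n - C (γ 2) * X * (K1 (n+1) + C (γ (2*n+3)) * K1 n) =
      P (n+2) + C (γ (2*n+3) + γ (2*n+4)) * P (n+1) +
        C (γ (2*n+2) * γ (2*n+3)) * P n := by
  have key : ∀ n : ℕ,
      (X * Q n = P (n+1) + C (γ 2) * (K1 (n+1) + C (γ (2*n+3)) * K1 n)) ∧
      (X * Q (n+1) = P (n+2) + C (γ 2) * (K1 (n+2) + C (γ (2*n+5)) * K1 (n+1))) := by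
    intro n
    induction n with
    | zero =>
      constructor
      · rw [hQ0, hP1, hK11, hK10]
        norm_num
      · have hp := hP 1 (by omega)
        have hk := hK1rec 1 (by omega)
        norm_num at hp hk
        rw [hQ1, hp, hk, hP1, hK11, hK10, hP0]
        simp only [map_add, map_mul]
        ring
    | succ m ih =>
      refine ⟨?_, ?_⟩
      · rw [show 2*(m+1)+3 = 2*m+5 from by ring]
        exact ih.2
      · have hq := hQ (m+1) (by omega)
        have hp := hP (m+2) (by omega)
        have hk2 := hK1rec (m+2) (by omega)
        have hk1 := hK1rec (m+1) (by omega)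
        have e1 := ih.2
        have e2 := ih.1
        simp only [show 2*(m+1)+3 = 2*m+5 from by ring,
          show 2*(m+1)+4 = 2*m+6 from by ring,
          show 2*(m+1)+2 = 2*m+4 from by ring,
          show 2*(m+2)+1 = 2*m+5 from by ring,
          show 2*(m+2)+2 = 2*m+6 from by ring,
          show 2*(m+2)+3 = 2*m+7 from by ring,
          show 2*(m+2) = 2*m+4 from by ring,
          show 2*(m+1)+1 = 2*m+3 from by ring,
          show 2*(m+1)+5 = 2*m+7 from by ring,
          show m+1+1 = m+2 from rfl, show m+2+1 = m+3 from rfl,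
          show m+2-1 = m+1 from rfl, show m+1-1 = m from rfl,
          map_add, map_mul] at hq hp hk2 hk1 e1 e2 ⊢
        linear_combination X * hq + (X - C (γ (2*m+5)) - C (γ (2*m+6))) * e1
          - C (γ (2*m+4)) * C (γ (2*m+5)) * e2 - hp - C (γ 2) * hk2
          - C (γ 2) * C (γ (2*m+5)) * hk1
  intro n hn
  have A := (key n).1
  have hp := hP (n+1) (by omega)
  simp only [show 2*(n+1)+1 = 2*n+3 from by ring,
    show 2*(n+1)+2 = 2*n+4 from by ring,
    show 2*(n+1) = 2*n+2 from by ring,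
    show n+1+1 = n+2 from rfl, show n+1-1 = n from rfl,
    map_add, map_mul] at hp A ⊢
  linear_combination X * A - hp
end

section
/- Let −1 < α < 0 be real and for n ≥ 1 let d_n = n(n+α)/((2n+α−1)(2n+α+1)). Then {d_n} determines its parameters uniquely: every parameter sequence {g_n}_{n≥0} of {d_n} (i.e., every sequence with 0 ≤ g_0 < 1, 0 < g_n < 1 for n ≥ 1, and d_n = (1 − g_{n−1})·g_n for all n ≥ 1) satisfies g_n = n/(2n+α+1) for all n ≥ 0. In other words, {d_n} is a single parameter positive chain sequence. -/
/-!
Write `mₙ = n/(2n+α+1)`; this is the parameter sequence of `{dₙ}` starting at `m₀ = 0`, and a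
parameter sequence is determined by its first term, so it suffices to rule out `g₀ > 0`.
If `g₀ > m₀`, then `gₙ > mₙ` for all `n`, and `aₙ = (1 - mₙ)/(gₙ - mₙ)` is a positive solution of
`aₙ₊₁ = cₙ (aₙ - 1)` with `cₙ = (1 - mₙ₊₁)/mₙ₊₁ = (n+1+α+1)/(n+1) ≤ (n+2)/(n+1)`.
By induction `aₙ ≤ (n+1)(a₀ - Hₙ)` with `Hₙ` the harmonic sums, which become negative.
-/

open Finset

theorem le_mul_sub_harmonic_of_eq_mul_sub_one {a c : ℕ → ℝ} (ha : ∀ n, 0 < a n)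
    (hc₀ : ∀ n, 0 ≤ c n) (hc : ∀ n, c n * (n + 1) ≤ n + 2)
    (hrec : ∀ n, a (n + 1) = c n * (a n - 1)) (n : ℕ) :
    a n ≤ (n + 1) * (a 0 - ∑ k ∈ range n, 1 / ((k : ℝ) + 1)) := by
  induction n with
  | zero => simp
  | succ n ih =>
    set s := a 0 - ∑ k ∈ range (n + 1), 1 / ((k : ℝ) + 1)
    have hs : (n + 1) * (a 0 - ∑ k ∈ range n, 1 / ((k : ℝ) + 1)) - 1 = (n + 1) * s := by
      simp only [s, sum_range_succ]
      field_simp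
      ring
    have hbound : a (n + 1) ≤ c n * (n + 1) * s := by
      rw [hrec, mul_assoc, ← hs]
      exact mul_le_mul_of_nonneg_left (by linarith) (hc₀ n)
    have hs_pos : 0 < s := by
      by_contra! hs_nonpos
      nlinarith [ha (n + 1), hc₀ n, mul_nonneg (hc₀ n) (n.cast_nonneg (α := ℝ))]
    push_cast
    nlinarith [hc n]

theorem not_forall_pos_of_eq_mul_sub_one {a c : ℕ → ℝ}
    (hc₀ : ∀ n, 0 ≤ c n) (hc : ∀ n, c n * (n + 1) ≤ n + 2)
    (hrec : ∀ n, a (n + 1) = c n * (a n - 1)) : ¬ ∀ n, 0 < a n := by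
  intro ha
  obtain ⟨n, hn⟩ := (Filter.tendsto_atTop.mp
    Real.tendsto_sum_range_one_div_nat_succ_atTop (a 0 + 1)).exists
  have := le_mul_sub_harmonic_of_eq_mul_sub_one ha hc₀ hc hrec n
  nlinarith [ha n, n.cast_nonneg (α := ℝ)]

section ChainSequence

variable {g m : ℕ → ℝ} (hchain : ∀ n, (1 - g n) * g (n + 1) = (1 - m n) * m (n + 1))
include hchain

theorem eq_of_chain_of_apply_zero_eq (hm : ∀ n, m n < 1) (h₀ : g 0 = m 0) : g = m := by
  funext n
  induction n with
  | zero => exact h₀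
  | succ n ih =>
    have h := hchain n
    rw [ih] at h
    exact mul_left_cancel₀ (sub_ne_zero.mpr (hm n).ne') h

theorem lt_of_chain_of_apply_zero_lt (hg : ∀ n, g n < 1) (hm : ∀ n, 0 < m (n + 1))
    (h₀ : m 0 < g 0) (n : ℕ) : m n < g n := by
  induction n with
  | zero => exact h₀
  | succ n ih =>
    have h := hchain n
    nlinarith [hg n, hm n]

theorem chain_ratio_succ_eq (hm : ∀ n, 0 < m (n + 1)) (hlt : ∀ n, m n < g n) (n : ℕ) :
    (1 - m (n + 1)) / (g (n + 1) - m (n + 1)) =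
      (1 - m (n + 1)) / m (n + 1) * ((1 - m n) / (g n - m n) - 1) := by
  have h₁ := (sub_pos.mpr (hlt n)).ne'
  have h₂ := (sub_pos.mpr (hlt (n + 1))).ne'
  rw [div_sub_one h₁, div_mul_div_comm, div_eq_div_iff h₂ (mul_ne_zero (hm n).ne' h₁)]
  linear_combination (m (n + 1) - 1) * hchain n

theorem apply_zero_le_of_chain (hg : ∀ n, g n < 1) (hm₁ : ∀ n, m n < 1) (hm : ∀ n, 0 < m (n + 1))
    (hratio : ∀ n, (1 - m (n + 1)) / m (n + 1) * (n + 1) ≤ n + 2) : g 0 ≤ m 0 := by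
  by_contra! h₀
  have hlt := lt_of_chain_of_apply_zero_lt hchain hg hm h₀
  refine not_forall_pos_of_eq_mul_sub_one (a := fun n => (1 - m n) / (g n - m n))
    (fun n => div_nonneg (sub_nonneg.mpr (hm₁ _).le) (hm n).le) hratio
    (chain_ratio_succ_eq hchain hm hlt) fun n => ?_
  exact div_pos (sub_pos.mpr (hm₁ n)) (sub_pos.mpr (hlt n))

end ChainSequence

noncomputable def laguerreParam (α : ℝ) (n : ℕ) : ℝ := n / (2 * n + α + 1)

section Laguerre

variable {α : ℝ}

theorem laguerreParam_zero : laguerreParam α 0 = 0 := by simp [laguerreParam]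

theorem laguerreParam_denom_pos (hα : -1 < α) (n : ℕ) : 0 < 2 * (n : ℝ) + α + 1 := by
  have := n.cast_nonneg (α := ℝ)
  linarith

theorem laguerreParam_lt_one (hα : -1 < α) (n : ℕ) : laguerreParam α n < 1 := by
  rw [laguerreParam, div_lt_one (laguerreParam_denom_pos hα n)]
  linarith [n.cast_nonneg (α := ℝ)]

theorem laguerreParam_succ_pos (hα : -1 < α) (n : ℕ) : 0 < laguerreParam α (n + 1) :=
  div_pos (by positivity) (laguerreParam_denom_pos hα _)

theorem one_sub_laguerreParam (hα : -1 < α) (n : ℕ) :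
    1 - laguerreParam α n = (n + α + 1) / (2 * n + α + 1) := by
  rw [laguerreParam, one_sub_div (laguerreParam_denom_pos hα n).ne']
  ring

theorem one_sub_laguerreParam_mul (hα : -1 < α) {k : ℕ} (hk : 1 ≤ k) :
    (1 - laguerreParam α (k - 1)) * laguerreParam α k =
      (k : ℝ) * ((k : ℝ) + α) / ((2 * (k : ℝ) + α - 1) * (2 * (k : ℝ) + α + 1)) := by
  obtain ⟨n, rfl⟩ := Nat.exists_eq_add_of_le' hk
  rw [one_sub_laguerreParam hα, laguerreParam, div_mul_div_comm, Nat.add_sub_cancel]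
  push_cast
  ring

theorem laguerreParam_ratio_le (hα₁ : -1 < α) (hα₂ : α < 0) (n : ℕ) :
    (1 - laguerreParam α (n + 1)) / laguerreParam α (n + 1) * (n + 1) ≤ n + 2 := by
  rw [one_sub_laguerreParam hα₁, laguerreParam,
    div_div_div_cancel_right₀ (laguerreParam_denom_pos hα₁ (n + 1)).ne']
  push_cast
  rw [div_mul_cancel₀ _ (by positivity)]
  linarith

end Laguerre

/-- For real `−1 < α < 0`, the Laguerre chain sequence
`dₙ = n(n+α)/((2n+α−1)(2n+α+1))` determines its parameters uniquely: every
parameter sequence `{gₙ}` of `{dₙ}` satisfies `gₙ = n/(2n+α+1)` for all `n ≥ 0`.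
In other words, `{dₙ}` is a single parameter positive chain sequence. -/
theorem stmt_16 (α : ℝ) (hα1 : -1 < α) (hα2 : α < 0) (d : ℕ → ℝ)
    (hd : ∀ n ≥ 1, d n = (n : ℝ) * ((n : ℝ) + α) /
      ((2 * (n : ℝ) + α - 1) * (2 * (n : ℝ) + α + 1))) :
    ∀ g : ℕ → ℝ, (0 ≤ g 0 ∧ g 0 < 1) → (∀ n ≥ 1, 0 < g n ∧ g n < 1) →
      (∀ n ≥ 1, d n = (1 - g (n-1)) * g n) →
      ∀ n : ℕ, g n = (n : ℝ) / (2 * (n : ℝ) + α + 1) := by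
  intro g hg₀ hg hrec
  have hg_lt : ∀ n, g n < 1 := by
    rintro (_ | n)
    exacts [hg₀.2, (hg _ n.succ_pos).2]
  have hchain : ∀ n, (1 - g n) * g (n + 1) =
      (1 - laguerreParam α n) * laguerreParam α (n + 1) := fun n => by
    have h := hrec (n + 1) n.succ_pos
    rw [hd (n + 1) n.succ_pos, ← one_sub_laguerreParam_mul hα1 n.succ_pos] at h
    simpa using h.symm
  have hle := apply_zero_le_of_chain hchain hg_lt (laguerreParam_lt_one hα1)
    (laguerreParam_succ_pos hα1) (laguerreParam_ratio_le hα1 hα2)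
  have h₀ : g 0 = laguerreParam α 0 := by
    rw [laguerreParam_zero] at hle ⊢
    exact le_antisymm hle hg₀.1
  exact congrFun (eq_of_chain_of_apply_zero_eq hchain (laguerreParam_lt_one hα1) h₀)
end

section
/- Let α > −1 be real. Define k_0 = 0, k_n = (n+α+1)/(2n+α+1) for n ≥ 1, and d̃_n = (1 − k_{n−1})·k_n for n ≥ 1, so that {d̃_n} is the complementary chain sequence of the Laguerre chain sequence d_n = n(n+α)/((2n+α−1)(2n+α+1)). Then {d̃_n} is a single parameter positive chain sequence: every parameter sequence {h_n}_{n≥0} of {d̃_n} (i.e., every sequence with 0 ≤ h_0 < 1, 0 < h_n < 1 for n ≥ 1, and d̃_n = (1 − h_{n−1})·h_n for all n ≥ 1) satisfies h_n = k_n for all n ≥ 0. -/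
/-!
If `g` and `m` are parameter sequences of the same chain sequence, subtracting the two chain
relations gives `(1 - g n) (g (n+1) - m (n+1)) = m (n+1) (g n - m n)`. Hence `g = m` as soon as
`g 0 = m 0`, while `g 0 > m 0` keeps `g n - m n` positive forever. In the latter case
`t n = (g n - m n) / (1 - m n)` satisfies `t (n+1) (1 - t n) = m (n+1) / (1 - m (n+1)) · t n`, and
when `m ≥ 1/2` this says that `1 / t` drops by at least `1` at every step, which a positive
sequence cannot do forever. For `α ≥ -1` all `kₙ = (n+α+1)/(2n+α+1)` with `n ≥ 1` are at least
`1/2`.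
-/

theorem not_forall_pos_of_le_mul_one_sub {t : ℕ → ℝ}
    (hrec : ∀ n, t n ≤ t (n + 1) * (1 - t n)) : ¬ ∀ n, 0 < t n := by
  intro hpos
  have hinv_succ : ∀ n, (t (n + 1))⁻¹ ≤ (t n)⁻¹ - 1 := fun n => by
    have hsub : ((t n)⁻¹ - 1) * t (n + 1) = t (n + 1) * (1 - t n) / t n := by
      field_simp [(hpos n).ne']
    rw [inv_le_iff_one_le_mul₀ (hpos (n + 1)), hsub, one_le_div (hpos n)]
    exact hrec n
  have hinv : ∀ n : ℕ, (t n)⁻¹ ≤ (t 0)⁻¹ - n := fun n => by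
    induction n with
    | zero => simp
    | succ n ih => push_cast; linarith [hinv_succ n]
  obtain ⟨n, hn⟩ := exists_nat_gt (t 0)⁻¹
  linarith [hinv n, inv_pos.2 (hpos n)]

structure IsChainParameter (d g : ℕ → ℝ) : Prop where
  zero_mem : 0 ≤ g 0 ∧ g 0 < 1
  mem : ∀ n ≥ 1, 0 < g n ∧ g n < 1
  eq : ∀ n ≥ 1, d n = (1 - g (n - 1)) * g n

namespace IsChainParameter

variable {d g m : ℕ → ℝ}

theorem lt_one (hg : IsChainParameter d g) (n : ℕ) : g n < 1 := by
  cases n with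
  | zero => exact hg.zero_mem.2
  | succ n => exact (hg.mem (n + 1) n.succ_pos).2

theorem eq_succ (hg : IsChainParameter d g) (n : ℕ) : d (n + 1) = (1 - g n) * g (n + 1) :=
  hg.eq (n + 1) n.succ_pos

theorem one_sub_mul_sub_succ (hm : IsChainParameter d m) (hg : IsChainParameter d g) (n : ℕ) :
    (1 - g n) * (g (n + 1) - m (n + 1)) = m (n + 1) * (g n - m n) := by
  linear_combination hm.eq_succ n - hg.eq_succ n

theorem eq_of_apply_zero_eq (hm : IsChainParameter d m) (hg : IsChainParameter d g)
    (h0 : g 0 = m 0) : g = m := by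
  funext n
  induction n with
  | zero => exact h0
  | succ n ih =>
    have h := hm.one_sub_mul_sub_succ hg n
    rw [ih, sub_self, mul_zero] at h
    have hne : 1 - m n ≠ 0 := (sub_pos.2 (hm.lt_one n)).ne'
    exact sub_eq_zero.1 ((mul_eq_zero.1 h).resolve_left hne)

theorem sub_pos_of_apply_zero_lt (hm : IsChainParameter d m) (hg : IsChainParameter d g)
    (h0 : m 0 < g 0) (n : ℕ) : 0 < g n - m n := by
  induction n with
  | zero => exact sub_pos.2 h0
  | succ n ih =>
    have h := hm.one_sub_mul_sub_succ hg n
    have hm_pos : 0 < m (n + 1) := (hm.mem (n + 1) n.succ_pos).1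
    exact pos_of_mul_pos_right (h ▸ mul_pos hm_pos ih) (sub_pos.2 (hg.lt_one n)).le

theorem eq_of_half_le (hm : IsChainParameter d m) (hm0 : m 0 = 0)
    (hhalf : ∀ n ≥ 1, 1 / 2 ≤ m n) (hg : IsChainParameter d g) : g = m := by
  rcases hg.zero_mem.1.eq_or_lt with h0 | h0
  · exact hm.eq_of_apply_zero_eq hg (hm0 ▸ h0).symm
  have he := hm.sub_pos_of_apply_zero_lt hg (hm0 ▸ h0)
  have hm_lt n : 0 < 1 - m n := sub_pos.2 (hm.lt_one n)
  refine absurd (fun n => div_pos (he n) (hm_lt n)) (not_forall_pos_of_le_mul_one_sub fun n => ?_)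
  have hrec : (g (n + 1) - m (n + 1)) / (1 - m (n + 1)) * (1 - (g n - m n) / (1 - m n)) =
      m (n + 1) / (1 - m (n + 1)) * ((g n - m n) / (1 - m n)) := by
    field_simp [(hm_lt n).ne', (hm_lt (n + 1)).ne']
    linear_combination hm.one_sub_mul_sub_succ hg n
  have hc : 1 ≤ m (n + 1) / (1 - m (n + 1)) :=
    (one_le_div (hm_lt _)).2 (by linarith [hhalf (n + 1) n.succ_pos])
  rw [hrec]
  exact le_mul_of_one_le_left (div_pos (he n) (hm_lt n)).le hc

end IsChainParameter

theorem div_mem_Ico_half_one {x α : ℝ} (hx : 0 < x) (hα : -1 ≤ α) :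
    (x + α + 1) / (2 * x + α + 1) ∈ Set.Ico (1 / 2) 1 := by
  have hden : 0 < 2 * x + α + 1 := by linarith
  constructor
  · rw [le_div_iff₀ hden]; linarith
  · rw [div_lt_one hden]; linarith

/-- For real `α > −1`, the complementary chain sequence of the
Laguerre chain sequence, namely `d̃ₙ = (1 − kₙ₋₁)·kₙ` with `k₀ = 0`,
`kₙ = (n+α+1)/(2n+α+1)` for `n ≥ 1`, is a single parameter positive chain
sequence: every parameter sequence `{hₙ}` of `{d̃ₙ}` equals `{kₙ}`. -/
theorem stmt_17 (α : ℝ) (hα : -1 < α) (k dt : ℕ → ℝ)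
    (hk0 : k 0 = 0)
    (hk : ∀ n ≥ 1, k n = ((n : ℝ) + α + 1) / (2 * (n : ℝ) + α + 1))
    (hdt : ∀ n ≥ 1, dt n = (1 - k (n-1)) * k n) :
    ∀ h : ℕ → ℝ, (0 ≤ h 0 ∧ h 0 < 1) → (∀ n ≥ 1, 0 < h n ∧ h n < 1) →
      (∀ n ≥ 1, dt n = (1 - h (n-1)) * h n) →
      ∀ n : ℕ, h n = k n := by
  intro h h0 hpos hrel
  have hk_mem : ∀ n ≥ 1, k n ∈ Set.Ico (1 / 2 : ℝ) 1 := fun n hn => by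
    rw [hk n hn]
    exact div_mem_Ico_half_one (by exact_mod_cast hn) hα.le
  have hk_param : IsChainParameter dt k :=
    ⟨by simp [hk0], fun n hn => ⟨by linarith [(hk_mem n hn).1], (hk_mem n hn).2⟩, hdt⟩
  exact congrFun (hk_param.eq_of_half_le hk0 (fun n hn => (hk_mem n hn).1) ⟨h0, hpos, hrel⟩)
end
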